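/- arXiv:0705.0412 — 2 statements merged into one kernel-verified Lean document; each statement's English description precedes it below -/
import Mathlib

section
/- Let v be a Gauss word of length 2n, and for 0 ≤ k < 2n let rotᵏ v denote the cyclic rotation of v by k positions. For every nanoword w, the sum Σ_{k=0}^{2n−1} (−1)ᵏ ⟨rotᵏ v, w⟩ is unchanged when w is replaced by its image under the base point move. (This sum is a positive integer multiple of the pairing [[v], w] of the cyclic equivalence class of v with w, where cyclic equivalence of signed Gauss words is generated by Bx ∼ −xB.) -/
/-!
Fix a subset `S` of letters of `w = a x`. If `a ∉ S`, the base point move changes neither the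
sub-word on `S` nor its sign. If `a ∈ S`, the sub-word is rotated by one step and its sign is
negated. Rotating the sub-word by one step is the same as rotating the pattern `v` one step back,
and since `v` has even length this shifts the alternating sum over rotations of `v` by one index,
which negates it. The two sign changes cancel.
-/

open Finset

/-- The canonical pattern of a word: each position is labelled by the index of the
first occurrence of its letter. Two words are isomorphic iff they have the same pattern. -/
def patternOf {α : Type*} [DecidableEq α] (l : List α) : List ℕ :=
  l.map (fun a => l.idxOf a)

/-- The sub-word of `w` determined by a set `S` of letters: read, in order, exactly
those values of `w` lying in `S`. -/
def subword {α : Type*} [DecidableEq α] (w : List α) (S : Finset α) : List α :=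
  w.filter (fun a => decide (a ∈ S))

/-- The pairing `⟨v, w⟩`: the sum, over all subsets `S` of the alphabet of `w` whose
induced sub-word is isomorphic to the pattern `v`, of `∏_{a ∈ S} sgn a`. -/
def pair {α : Type*} [DecidableEq α] (v : List ℕ) (w : List α) (sgn : α → ℤ) : ℤ :=
  ∑ S ∈ w.toFinset.powerset,
    if patternOf (subword w S) = patternOf v then ∏ a ∈ S, sgn a else 0

theorem Function.Periodic.sum_range_neg_one_pow_mul_add_one {R : Type*} [CommRing R]
    {f : ℕ → R} {L : ℕ} (hf : Function.Periodic f L) (hL : Even L) :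
    ∑ k ∈ range L, (-1) ^ k * f (k + 1) = -∑ k ∈ range L, (-1) ^ k * f k := by
  have hshift := (sum_range_succ' (fun k => (-1 : R) ^ k * f k) L).symm.trans
    (sum_range_succ (fun k => (-1 : R) ^ k * f k) L)
  rw [hL.neg_one_pow, ← zero_add L, hf 0, zero_add, pow_zero, add_left_inj] at hshift
  simp only [pow_succ, mul_neg_one, neg_mul, sum_neg_distrib] at hshift
  rw [← hshift, neg_neg]

section Pattern

variable {α β : Type*} [DecidableEq α] [DecidableEq β]

theorem List.idxOf_map_of_injOn {f : α → β} {l : List α} (hf : Set.InjOn f {x | x ∈ l})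
    {a : α} (ha : a ∈ l) : (l.map f).idxOf (f a) = l.idxOf a := by
  induction l with
  | nil => simp at ha
  | cons b l ih =>
    by_cases hba : b = a
    · simp [hba]
    · have hfba : f b ≠ f a := fun h => hba (hf (by simp) (by exact ha) h)
      have ha' : a ∈ l := by simpa [Ne.symm hba] using ha
      simp only [List.map_cons, List.idxOf_cons_ne _ hfba, List.idxOf_cons_ne _ hba]
      exact congrArg Nat.succ (ih (hf.mono fun x hx => List.mem_cons_of_mem b hx) ha')

@[simp]
theorem length_patternOf (l : List α) : (patternOf l).length = l.length :=
  List.length_map _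

theorem patternOf_map {f : α → β} {l : List α} (hf : Set.InjOn f {x | x ∈ l}) :
    patternOf (l.map f) = patternOf l := by
  simp only [patternOf, List.map_map]
  exact List.map_congr_left fun a ha => List.idxOf_map_of_injOn hf ha

/-- `patternOf l` is an injective relabelling of `l`, so the pattern of a rotation only
depends on the pattern. -/
theorem patternOf_rotate (l : List α) (k : ℕ) :
    patternOf (l.rotate k) = patternOf ((patternOf l).rotate k) := by
  have hinj : Set.InjOn l.idxOf {x | x ∈ l.rotate k} := fun x hx _ _ h =>
    (List.idxOf_inj (List.mem_rotate.1 hx)).1 h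
  rw [show (patternOf l).rotate k = (l.rotate k).map l.idxOf from (List.map_rotate _ _ _).symm,
    patternOf_map hinj]

theorem patternOf_rotate_congr {l : List α} {m : List β} (h : patternOf l = patternOf m)
    (k : ℕ) : patternOf (l.rotate k) = patternOf (m.rotate k) := by
  rw [patternOf_rotate, h, ← patternOf_rotate]

theorem patternOf_rotate_eq_iff {l : List α} {m : List β} {k : ℕ} :
    patternOf (l.rotate k) = patternOf (m.rotate k) ↔ patternOf l = patternOf m := by
  refine ⟨fun h => ?_, fun h => patternOf_rotate_congr h k⟩
  have hlen : l.length = m.length := by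
    simpa using congrArg List.length h
  rw [List.rotate_eq_iff.1 (rfl : l.rotate k = _), List.rotate_eq_iff.1 (rfl : m.rotate k = _)]
  simpa [hlen] using patternOf_rotate_congr h (m.length - k % m.length)

end Pattern

section Subword

variable {α : Type*} [DecidableEq α]

theorem subword_append_singleton_of_mem {a : α} {S : Finset α} (x : List α) (ha : a ∈ S) :
    subword (x ++ [a]) S = (subword (a :: x) S).rotate 1 := by
  simp [subword, List.filter_append, ha]

theorem subword_append_singleton_of_notMem {a : α} {S : Finset α} (x : List α) (ha : a ∉ S) :
    subword (x ++ [a]) S = subword (a :: x) S := by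
  simp [subword, List.filter_append, ha]

end Subword

def alternatingRotationCount {α β : Type*} [DecidableEq α] [DecidableEq β]
    (v : List β) (u : List α) : ℤ :=
  ∑ k ∈ range v.length, (-1) ^ k * if patternOf u = patternOf (v.rotate k) then 1 else 0

section AlternatingRotationCount

variable {α β : Type*} [DecidableEq α] [DecidableEq β]

theorem alternatingRotationCount_rotate_one {v : List β} (hv : Even v.length) (u : List α) :
    alternatingRotationCount v (u.rotate 1) = -alternatingRotationCount v u := by
  set f : ℕ → ℤ := fun k => if patternOf (u.rotate 1) = patternOf (v.rotate k) then 1 else 0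
  have hf : Function.Periodic f v.length := fun k => by
    simp only [f, ← List.rotate_mod v (k + _), Nat.add_mod_right, List.rotate_mod]
  have hshift : ∀ k, f (k + 1) = if patternOf u = patternOf (v.rotate k) then 1 else 0 :=
    fun k => by simp only [f, ← List.rotate_rotate, patternOf_rotate_eq_iff]
  have hsum := hf.sum_range_neg_one_pow_mul_add_one hv
  simp only [hshift] at hsum
  rw [alternatingRotationCount, alternatingRotationCount, hsum, neg_neg]

theorem sum_neg_one_pow_mul_pair (v : List ℕ) (w : List α) (sgn : α → ℤ) :
    ∑ k ∈ range v.length, (-1) ^ k * pair (v.rotate k) w sgn =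
      ∑ S ∈ w.toFinset.powerset, (∏ a ∈ S, sgn a) * alternatingRotationCount v (subword w S) := by
  simp only [pair, alternatingRotationCount, mul_sum]
  rw [sum_comm]
  refine sum_congr rfl fun S _ => sum_congr rfl fun k _ => ?_
  split_ifs <;> ring

end AlternatingRotationCount

theorem alternating_rotation_sum_base_point_invariant_general {α : Type*} [DecidableEq α]
    (n : ℕ) (v : List ℕ) (hvlen : v.length = 2 * n)
    (a : α) (x : List α) (sgn : α → ℤ) :
    ∑ k ∈ Finset.range (2 * n), (-1 : ℤ) ^ k * pair (v.rotate k) (a :: x) sgn =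
      ∑ k ∈ Finset.range (2 * n), (-1 : ℤ) ^ k *
        pair (v.rotate k) (x ++ [a]) (Function.update sgn a (-(sgn a))) := by
  have hv : Even v.length := hvlen ▸ even_two_mul n
  rw [← hvlen, sum_neg_one_pow_mul_pair, sum_neg_one_pow_mul_pair,
    List.toFinset_eq_of_perm _ _ (List.perm_append_singleton a x)]
  refine sum_congr rfl fun S _ => ?_
  by_cases haS : a ∈ S
  · rw [subword_append_singleton_of_mem x haS, alternatingRotationCount_rotate_one hv,
      prod_update_of_mem haS, prod_eq_mul_prod_sdiff_singleton_of_mem haS]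
    ring
  · rw [subword_append_singleton_of_notMem x haS, prod_update_of_notMem haS]

/-- For a Gauss word `v` of length `2n`, the alternating sum
`Σ_{k=0}^{2n-1} (-1)^k ⟨rotᵏ v, w⟩` is unchanged when the nanoword `w` is replaced
by its image under the base point move (rotate one step, negate the sign of the
first letter). -/
theorem alternating_rotation_sum_base_point_invariant {α : Type*} [DecidableEq α]
    (n : ℕ) (v : List ℕ) (hvGauss : ∀ c ∈ v, v.count c = 2) (hvlen : v.length = 2 * n)
    (a : α) (x : List α) (sgn : α → ℤ)
    (hGauss : ∀ c ∈ a :: x, (a :: x).count c = 2)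
    (hsgn : ∀ c, sgn c = 1 ∨ sgn c = -1) :
    ∑ k ∈ Finset.range (2 * n), (-1 : ℤ) ^ k * pair (v.rotate k) (a :: x) sgn =
      ∑ k ∈ Finset.range (2 * n), (-1 : ℤ) ^ k *
        pair (v.rotate k) (x ++ [a]) (Function.update sgn a (-(sgn a))) :=
  alternating_rotation_sum_base_point_invariant_general n v hvlen a x sgn
end

section
/- Let w' be obtained from a nanoword w by the elementary move III, i.e. w = xAByACzBCt and w' = xBAyCAzCBt where A, B, C are letters with sgn(A) = sgn(B) = sgn(C). Then ⟨XXYY, w'⟩ = ⟨XXYY, w⟩ − 1, ⟨XYYX, w'⟩ = ⟨XYYX, w⟩ + 2, and ⟨XYXY, w'⟩ = ⟨XYXY, w⟩ − 1; moreover the number of letters and the total sign sum Σ_a sgn(a) are unchanged. -/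
/-!
Move III only reorders the three adjacent pairs `AB`, `AC`, `BC`, so the sub-word cut out by a
set `S` of letters changes only when `S` contains two of `A`, `B`, `C`. Every letter occurs twice,
so only 2-element sets can match a 4-letter pattern, and the only contributing changes are those
of `S = {A, B}, {A, C}, {B, C}`: `ABAB ↦ BAAB`, `AACC ↦ ACAC`, `BCBC ↦ BCCB`, that is
`XYXY ↦ XYYX`, `XXYY ↦ XYXY`, `XYXY ↦ XYYX`, each weighted by a product of two equal signs, `1`.
The alphabet is unchanged because the new word is a permutation of the old one.
-/

open Finset

theorem filter_pair_swap {α : Type*} (p : α → Bool) {a b : α} (h : ¬(p a ∧ p b)) :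
    [b, a].filter p = [a, b].filter p := by
  cases ha : p a <;> cases hb : p b <;> simp_all [List.filter]

section

variable {α : Type*} [DecidableEq α]

def pairSummand (v : List ℕ) (w : List α) (sgn : α → ℤ) (S : Finset α) : ℤ :=
  if patternOf (subword w S) = patternOf v then ∏ a ∈ S, sgn a else 0

theorem pair_eq_sum_pairSummand (v : List ℕ) (w : List α) (sgn : α → ℤ) :
    pair v w sgn = ∑ S ∈ w.toFinset.powerset, pairSummand v w sgn S := rfl

theorem length_subword (w : List α) (S : Finset α) :
    (subword w S).length = ∑ a ∈ S, w.count a := by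
  induction w with
  | nil => simp [subword]
  | cons c w ih =>
    by_cases hc : c ∈ S <;> simp_all [subword, List.count_cons, sum_add_distrib]

theorem pairSummand_eq_zero_of_length_ne {v : List ℕ} {w : List α} {S : Finset α} (sgn : α → ℤ)
    (hS : ∀ a ∈ S, w.count a = 2) (hv : v.length ≠ 2 * S.card) :
    pairSummand v w sgn S = 0 := by
  have hlen : (subword w S).length = 2 * S.card := by
    rw [length_subword, sum_congr rfl hS, sum_const, smul_eq_mul, mul_comm]
  refine if_neg fun h => hv ?_
  simpa [patternOf, hlen] using (congrArg List.length h).symm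

theorem pairSummand_pair {v : List ℕ} {w : List α} {a b : α} (sgn : α → ℤ) (hab : a ≠ b) :
    pairSummand v w sgn {a, b} =
      if patternOf (subword w {a, b}) = patternOf v then sgn a * sgn b else 0 := by
  rw [pairSummand, prod_pair hab]

theorem patternOf_abab {a b : α} (h : a ≠ b) : patternOf [a, b, a, b] = [0, 1, 0, 1] := by
  simp [patternOf, h]

theorem patternOf_abba {a b : α} (h : a ≠ b) : patternOf [a, b, b, a] = [0, 1, 1, 0] := by
  simp [patternOf, h]

theorem patternOf_aabb {a b : α} (h : a ≠ b) : patternOf [a, a, b, b] = [0, 0, 2, 2] := by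
  simp [patternOf, h]

theorem subword_of_disjoint {x y z t : List α} {S : Finset α}
    (h : ∀ a ∈ S, a ∉ x ++ y ++ z ++ t) (a b c d e f : α) :
    subword (x ++ [a, b] ++ y ++ [c, d] ++ z ++ [e, f] ++ t) S = subword [a, b, c, d, e, f] S := by
  have hnil : ∀ l ∈ [x, y, z, t], l.filter (fun a => decide (a ∈ S)) = [] := by
    intro l hl
    refine List.filter_eq_nil_iff.mpr fun a hal haS => h a (of_decide_eq_true haS) ?_
    simp only [List.mem_cons, List.not_mem_nil, or_false] at hl
    rcases hl with rfl | rfl | rfl | rfl <;> simp [hal]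
  rw [show [a, b, c, d, e, f] = [a, b] ++ [c, d] ++ [e, f] from rfl]
  simp only [subword, List.filter_append, hnil x (by simp), hnil y (by simp),
    hnil z (by simp), hnil t (by simp), List.nil_append, List.append_nil]

variable (x y z t : List α) (A B C : α)

def moveIIIBefore : List α := x ++ [A, B] ++ y ++ [A, C] ++ z ++ [B, C] ++ t

def moveIIIAfter : List α := x ++ [B, A] ++ y ++ [C, A] ++ z ++ [C, B] ++ t

theorem moveIIIAfter_perm : (moveIIIAfter x y z t A B C).Perm (moveIIIBefore x y z t A B C) := by
  simp only [moveIIIAfter, moveIIIBefore, List.perm_iff_count, List.count_append, List.count_cons,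
    List.count_nil]
  omega

theorem moveIIIBefore_perm :
    (moveIIIBefore x y z t A B C).Perm (x ++ y ++ z ++ t ++ [A, B, A, C, B, C]) := by
  simp only [moveIIIBefore, List.perm_iff_count, List.count_append, List.count_cons,
    List.count_nil]
  omega

variable {x y z t A B C}

theorem notMem_of_moveIIIBefore_gauss
    (hGauss : ∀ c ∈ moveIIIBefore x y z t A B C, (moveIIIBefore x y z t A B C).count c = 2)
    {D : α} (hD : D ∈ [A, B, C]) : D ∉ x ++ y ++ z ++ t := by
  have hperm := moveIIIBefore_perm x y z t A B C
  have hcore : 2 ≤ [A, B, A, C, B, C].count D := by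
    simp only [List.mem_cons, List.not_mem_nil, or_false] at hD
    rcases hD with rfl | rfl | rfl <;> simp [List.count_cons] <;> omega
  have h := hGauss D
    (hperm.mem_iff.mpr (List.mem_append_right _ (List.count_pos_iff.mp (by omega))))
  rw [hperm.count_eq, List.count_append] at h
  exact List.count_eq_zero.mp (by omega)

theorem subword_moveIIIAfter {S : Finset α} (hAB : ¬(A ∈ S ∧ B ∈ S)) (hAC : ¬(A ∈ S ∧ C ∈ S))
    (hBC : ¬(B ∈ S ∧ C ∈ S)) :
    subword (moveIIIAfter x y z t A B C) S = subword (moveIIIBefore x y z t A B C) S := by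
  simp only [moveIIIAfter, moveIIIBefore, subword, List.filter_append]
  rw [filter_pair_swap (a := A) (b := B) _ (by simpa using hAB),
    filter_pair_swap (a := A) (b := C) _ (by simpa using hAC),
    filter_pair_swap (a := B) (b := C) _ (by simpa using hBC)]

theorem pair_moveIIIAfter_sub_pair_eq_sum {v : List ℕ} (sgn : α → ℤ)
    (hGauss : ∀ c ∈ moveIIIBefore x y z t A B C, (moveIIIBefore x y z t A B C).count c = 2)
    (hAB : A ≠ B) (hAC : A ≠ C) (hBC : B ≠ C) (hv : v.length = 4) :
    pair v (moveIIIAfter x y z t A B C) sgn - pair v (moveIIIBefore x y z t A B C) sgn =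
      ∑ S ∈ {{A, B}, {A, C}, {B, C}}, (pairSummand v (moveIIIAfter x y z t A B C) sgn S -
        pairSummand v (moveIIIBefore x y z t A B C) sgn S) := by
  set w := moveIIIBefore x y z t A B C
  set w' := moveIIIAfter x y z t A B C
  have hperm : w'.Perm w := moveIIIAfter_perm x y z t A B C
  rw [pair_eq_sum_pairSummand, pair_eq_sum_pairSummand, List.toFinset_eq_of_perm _ _ hperm,
    ← sum_sub_distrib]
  refine (sum_subset ?_ fun S hS hST => ?_).symm
  · simp [insert_subset_iff, w, moveIIIBefore]
  have hcount : ∀ a ∈ S, w.count a = 2 := fun a ha =>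
    hGauss a (List.mem_toFinset.mp (mem_powerset.mp hS ha))
  by_cases hcard : S.card = 2
  · have hnot : ∀ a b, a ≠ b → ({a, b} : Finset α) ∈ ({{A, B}, {A, C}, {B, C}} : Finset _) →
        ¬(a ∈ S ∧ b ∈ S) := fun a b hab hmem ⟨ha, hb⟩ =>
      hST (eq_of_subset_of_card_le (insert_subset_iff.mpr ⟨ha, singleton_subset_iff.mpr hb⟩)
        (by rw [hcard, card_pair hab]) ▸ hmem)
    rw [pairSummand, pairSummand, subword_moveIIIAfter (hnot A B hAB (by simp))
      (hnot A C hAC (by simp)) (hnot B C hBC (by simp)), sub_self]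
  · rw [pairSummand_eq_zero_of_length_ne sgn hcount (by omega),
      pairSummand_eq_zero_of_length_ne sgn (fun a ha => (hperm.count_eq a).trans (hcount a ha))
        (by omega), sub_self]

theorem pair_moveIIIAfter_sub_pair {v : List ℕ} (sgn : α → ℤ)
    (hGauss : ∀ c ∈ moveIIIBefore x y z t A B C, (moveIIIBefore x y z t A B C).count c = 2)
    (hAB : A ≠ B) (hAC : A ≠ C) (hBC : B ≠ C) (hv : v.length = 4) :
    pair v (moveIIIAfter x y z t A B C) sgn - pair v (moveIIIBefore x y z t A B C) sgn =
      ((if [0, 1, 1, 0] = patternOf v then sgn A * sgn B else 0) -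
        (if [0, 1, 0, 1] = patternOf v then sgn A * sgn B else 0)) +
      ((if [0, 1, 0, 1] = patternOf v then sgn A * sgn C else 0) -
        (if [0, 0, 2, 2] = patternOf v then sgn A * sgn C else 0)) +
      ((if [0, 1, 1, 0] = patternOf v then sgn B * sgn C else 0) -
        (if [0, 1, 0, 1] = patternOf v then sgn B * sgn C else 0)) := by
  have hrest : ∀ S ⊆ ({A, B, C} : Finset α), ∀ a ∈ S, a ∉ x ++ y ++ z ++ t := fun S hS a ha =>
    notMem_of_moveIIIBefore_gauss hGauss (by simpa using hS ha)
  have hC : C ∉ ({A, B} : Finset α) := by simp [hAC.symm, hBC.symm]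
  have hB : B ∉ ({A, C} : Finset α) := by simp [hAB.symm, hBC]
  rw [pair_moveIIIAfter_sub_pair_eq_sum sgn hGauss hAB hAC hBC hv,
    sum_insert (by simpa using ⟨(ne_of_mem_of_not_mem' (by simp) hC).symm,
      (ne_of_mem_of_not_mem' (by simp) hC).symm⟩),
    sum_insert (by simpa using (ne_of_mem_of_not_mem' (by simp) hB).symm), sum_singleton,
    pairSummand_pair sgn hAB, pairSummand_pair sgn hAB, pairSummand_pair sgn hAC,
    pairSummand_pair sgn hAC, pairSummand_pair sgn hBC, pairSummand_pair sgn hBC]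
  have hABsub : ({A, B} : Finset α) ⊆ {A, B, C} := by simp
  have hACsub : ({A, C} : Finset α) ⊆ {A, B, C} := by simp
  have hBCsub : ({B, C} : Finset α) ⊆ {A, B, C} := by simp
  simp only [moveIIIAfter, moveIIIBefore, subword_of_disjoint (hrest _ hABsub),
    subword_of_disjoint (hrest _ hACsub), subword_of_disjoint (hrest _ hBCsub)]
  simp [subword, hAB, hAC, hBC, hAB.symm, hAC.symm, hBC.symm, patternOf_abab, patternOf_abba,
    patternOf_aabb, add_assoc]

end

/-- effect of the elementary move III, `xAByACzBCt ↦ xBAyCAzCBt` with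
`sgn A = sgn B = sgn C`: `⟨XXYY⟩` decreases by 1, `⟨XYYX⟩` increases by 2,
`⟨XYXY⟩` decreases by 1, and the number of letters and the total sign sum are
unchanged. -/
theorem move_III_effect {α : Type*} [DecidableEq α]
    (x y z t : List α) (A B C : α) (sgn : α → ℤ)
    (hGauss : ∀ c ∈ x ++ [A, B] ++ y ++ [A, C] ++ z ++ [B, C] ++ t,
      (x ++ [A, B] ++ y ++ [A, C] ++ z ++ [B, C] ++ t).count c = 2)
    (hsgn : ∀ c, sgn c = 1 ∨ sgn c = -1)
    (hAB : A ≠ B) (hAC : A ≠ C) (hBC : B ≠ C)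
    (hsAB : sgn A = sgn B) (hsBC : sgn B = sgn C) :
    pair [0,0,1,1] (x ++ [B, A] ++ y ++ [C, A] ++ z ++ [C, B] ++ t) sgn
        = pair [0,0,1,1] (x ++ [A, B] ++ y ++ [A, C] ++ z ++ [B, C] ++ t) sgn - 1 ∧
    pair [0,1,1,0] (x ++ [B, A] ++ y ++ [C, A] ++ z ++ [C, B] ++ t) sgn
        = pair [0,1,1,0] (x ++ [A, B] ++ y ++ [A, C] ++ z ++ [B, C] ++ t) sgn + 2 ∧
    pair [0,1,0,1] (x ++ [B, A] ++ y ++ [C, A] ++ z ++ [C, B] ++ t) sgn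
        = pair [0,1,0,1] (x ++ [A, B] ++ y ++ [A, C] ++ z ++ [B, C] ++ t) sgn - 1 ∧
    (x ++ [B, A] ++ y ++ [C, A] ++ z ++ [C, B] ++ t).toFinset.card
        = (x ++ [A, B] ++ y ++ [A, C] ++ z ++ [B, C] ++ t).toFinset.card ∧
    ∑ c ∈ (x ++ [B, A] ++ y ++ [C, A] ++ z ++ [C, B] ++ t).toFinset, sgn c
        = ∑ c ∈ (x ++ [A, B] ++ y ++ [A, C] ++ z ++ [B, C] ++ t).toFinset, sgn c := by
  have hsq : ∀ c, sgn c * sgn c = 1 := fun c => by rcases hsgn c with h | h <;> simp [h]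
  have hsAB' : sgn A * sgn B = 1 := hsAB ▸ hsq B
  have hsAC' : sgn A * sgn C = 1 := hsAB ▸ hsBC ▸ hsq C
  have hsBC' : sgn B * sgn C = 1 := hsBC ▸ hsq C
  have hdiff := fun v hv => pair_moveIIIAfter_sub_pair (v := v) sgn hGauss hAB hAC hBC hv
  have h1 := hdiff [0, 0, 1, 1] rfl
  have h2 := hdiff [0, 1, 1, 0] rfl
  have h3 := hdiff [0, 1, 0, 1] rfl
  norm_num [patternOf, hsAB', hsAC', hsBC'] at h1 h2 h3
  unfold moveIIIAfter moveIIIBefore at h1 h2 h3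
  have hF := List.toFinset_eq_of_perm _ _ (moveIIIAfter_perm x y z t A B C)
  exact ⟨by linarith, by linarith, by linarith, congrArg card hF, congrArg (∑ c ∈ ·, sgn c) hF⟩
end
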